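/- arXiv:1211.0992 — 4 statements merged into one kernel-verified Lean document; each statement's English description precedes it below -/
import Mathlib

section
/- Let X and Y be real random variables with finite fourth moments, and let B be an event such that |X - Y| ≤ ε almost surely on B, for some ε > 0. Then |Var(X) - Var(Y)| ≤ ‖X - Y‖₄ (‖X‖₂ + ‖Y‖₂) P(Bᶜ)^{1/4} + ε (‖X‖₂ + ‖Y‖₂). -/
/-!
`Var X - Var Y = Cov(X - Y, X + Y) = 𝔼[(X - Y) W]` with `W = X + Y - 𝔼[X + Y]`, and
`‖W‖₂ ≤ ‖X + Y‖₂ ≤ ‖X‖₂ + ‖Y‖₂`. Split `𝔼|(X - Y) W|` along `B`: on `B` it is at most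
`ε ‖W‖₁ ≤ ε ‖W‖₂`; on `Bᶜ` Cauchy–Schwarz and Hölder give
`‖(X - Y) 1_{Bᶜ}‖₂ ‖W‖₂ ≤ ‖X - Y‖₄ ℙ(Bᶜ)^{1/4} ‖W‖₂`.
-/

open MeasureTheory ProbabilityTheory
open scoped ENNReal

section

variable {Ω : Type*} {mΩ : MeasurableSpace Ω} {μ : Measure Ω}

lemma variance_sub_variance_eq_covariance [IsFiniteMeasure μ] {X Y : Ω → ℝ}
    (hX : MemLp X 2 μ) (hY : MemLp Y 2 μ) :
    Var[X; μ] - Var[Y; μ] = cov[X - Y, X + Y; μ] := by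
  rw [covariance_sub_left hX hY (hX.add hY), covariance_add_right hX hX hY,
    covariance_add_right hY hX hY, covariance_self hX.aemeasurable,
    covariance_self hY.aemeasurable, covariance_comm X Y]
  ring

lemma covariance_eq_integral_mul_sub [IsProbabilityMeasure μ] {X Y : Ω → ℝ}
    (hX : MemLp X 2 μ) (hY : MemLp Y 2 μ) :
    cov[X, Y; μ] = ∫ ω, X ω * (Y ω - μ[Y]) ∂μ := by
  have hY₁ := hY.integrable one_le_two
  have hYc : MemLp (fun ω ↦ Y ω - μ[Y]) 2 μ := hY.sub (memLp_const _)
  rw [← covariance_sub_const_right hY₁ μ[Y], covariance_eq_sub hX hYc]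
  simp [integral_sub hY₁ (integrable_const _)]

lemma eLpNorm_two_pow_two_eq_lintegral {E : Type*} [NormedAddCommGroup E] (f : Ω → E) :
    eLpNorm f 2 μ ^ 2 = ∫⁻ ω, ‖f ω‖ₑ ^ 2 ∂μ := by
  simpa using eLpNorm_nnreal_pow_eq_lintegral (f := f) (μ := μ) (p := 2) two_ne_zero

lemma eLpNorm_sub_integral_le [IsProbabilityMeasure μ] {X : Ω → ℝ}
    (hX : AEStronglyMeasurable X μ) :
    eLpNorm (fun ω ↦ X ω - μ[X]) 2 μ ≤ eLpNorm X 2 μ := by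
  refine (ENNReal.pow_le_pow_left_iff two_ne_zero).1 ?_
  rw [eLpNorm_two_pow_two_eq_lintegral, eLpNorm_two_pow_two_eq_lintegral]
  calc ∫⁻ ω, ‖X ω - μ[X]‖ₑ ^ 2 ∂μ = eVar[X; μ] := rfl
    _ ≤ ∫⁻ ω, ‖X ω‖ₑ ^ 2 ∂μ := by rw [evariance_def' hX]; exact tsub_le_self

lemma eLpNorm_restrict_le_eLpNorm_mul_rpow_measure {E : Type*} [NormedAddCommGroup E]
    {p q : ℝ≥0∞} (hpq : p ≤ q) {f : Ω → E} (hf : AEStronglyMeasurable f μ) (s : Set Ω) :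
    eLpNorm f p (μ.restrict s) ≤ eLpNorm f q μ * μ s ^ (1 / p.toReal - 1 / q.toReal) := by
  calc eLpNorm f p (μ.restrict s)
      ≤ eLpNorm f q (μ.restrict s) * μ.restrict s Set.univ ^ (1 / p.toReal - 1 / q.toReal) :=
        eLpNorm_le_eLpNorm_mul_rpow_measure_univ hpq hf.restrict
    _ ≤ _ := by
        rw [Measure.restrict_apply_univ]
        gcongr
        exact Measure.restrict_le_self

lemma eLpNorm_one_mul_le_of_abs_le_on [IsProbabilityMeasure μ] {q : ℝ≥0∞} (hq : 2 ≤ q)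
    {f g : Ω → ℝ} (hf : AEStronglyMeasurable f μ) (hg : AEStronglyMeasurable g μ)
    {s : Set Ω} (hs : MeasurableSet s) {ε : ℝ} (hfs : ∀ᵐ ω ∂μ, ω ∈ s → |f ω| ≤ ε) :
    eLpNorm (f * g) 1 μ ≤
      (eLpNorm f q μ * μ sᶜ ^ (1 / 2 - 1 / q.toReal) + ENNReal.ofReal ε) * eLpNorm g 2 μ := by
  have on_s : eLpNorm (f * g) 1 (μ.restrict s) ≤ ENNReal.ofReal ε * eLpNorm g 2 μ := by
    calc eLpNorm (f * g) 1 (μ.restrict s)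
        ≤ eLpNorm f ∞ (μ.restrict s) * eLpNorm g 1 (μ.restrict s) :=
          eLpNorm_smul_le_eLpNorm_top_mul_eLpNorm 1 hg.restrict f
      _ ≤ ENNReal.ofReal ε * eLpNorm g 2 μ := by
          gcongr
          · refine eLpNormEssSup_le_of_ae_bound ((ae_restrict_iff' hs).2 ?_)
            simpa only [Real.norm_eq_abs] using hfs
          · exact (eLpNorm_restrict_le g 1 μ s).trans
              (eLpNorm_le_eLpNorm_of_exponent_le one_le_two hg)
  have on_compl : eLpNorm (f * g) 1 (μ.restrict sᶜ) ≤
      eLpNorm f q μ * μ sᶜ ^ (1 / 2 - 1 / q.toReal) * eLpNorm g 2 μ := by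
    calc eLpNorm (f * g) 1 (μ.restrict sᶜ)
        ≤ eLpNorm f 2 (μ.restrict sᶜ) * eLpNorm g 2 (μ.restrict sᶜ) :=
          (eLpNorm_smul_le_mul_eLpNorm (p := 2) (q := 2) (r := 1) (hg.restrict (s := sᶜ))
            (hf.restrict (s := sᶜ)) :)
      _ ≤ _ := by
          gcongr
          · simpa using eLpNorm_restrict_le_eLpNorm_mul_rpow_measure hq hf sᶜ
          · exact Measure.restrict_le_self
  calc eLpNorm (f * g) 1 μ
      = eLpNorm (f * g) 1 (μ.restrict s) + eLpNorm (f * g) 1 (μ.restrict sᶜ) := by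
        rw [← eLpNorm_one_add_measure, Measure.restrict_add_restrict_compl hs]
    _ ≤ _ := add_le_add on_s on_compl
    _ = _ := by ring

end

/-- If `X` and `Y` have finite fourth moments and `|X - Y| ≤ ε` a.s. on the event `B`, then
`|Var X - Var Y| ≤ ‖X-Y‖₄ (‖X‖₂ + ‖Y‖₂) ℙ(Bᶜ)^{1/4} + ε (‖X‖₂ + ‖Y‖₂)`. -/
theorem stmt0 {Ω : Type*} [MeasureSpace Ω] [IsProbabilityMeasure (ℙ : Measure Ω)]
    (X Y : Ω → ℝ) (hX : MemLp X 4) (hY : MemLp Y 4)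
    (B : Set Ω) (hB : MeasurableSet B) (ε : ℝ) (hε : 0 < ε)
    (hXY : ∀ᵐ ω ∂(ℙ : Measure Ω), ω ∈ B → |X ω - Y ω| ≤ ε) :
    |variance X ℙ - variance Y ℙ| ≤
      (eLpNorm (X - Y) 4 ℙ).toReal * ((eLpNorm X 2 ℙ).toReal + (eLpNorm Y 2 ℙ).toReal)
        * ((ℙ Bᶜ).toReal) ^ ((1 : ℝ)/4)
      + ε * ((eLpNorm X 2 ℙ).toReal + (eLpNorm Y 2 ℙ).toReal) := by
  have hX₂ : MemLp X 2 := hX.mono_exponent (by norm_num)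
  have hY₂ : MemLp Y 2 := hY.mono_exponent (by norm_num)
  set W : Ω → ℝ := fun ω ↦ (X + Y) ω - 𝔼[X + Y]
  have hW : eLpNorm W 2 ℙ ≤ eLpNorm X 2 ℙ + eLpNorm Y 2 ℙ :=
    (eLpNorm_sub_integral_le (hX₂.add hY₂).1).trans (eLpNorm_add_le hX₂.1 hY₂.1 one_le_two)
  have hXYW := eLpNorm_one_mul_le_of_abs_le_on (q := 4) (g := W) (by norm_num) (hX.sub hY).1
    ((hX₂.add hY₂).1.sub aestronglyMeasurable_const) hB hXY
  rw [show (1 / 2 - 1 / (4 : ℝ≥0∞).toReal) = (1 : ℝ) / 4 by norm_num] at hXYW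
  have hbound : ‖∫ ω, (X - Y) ω * W ω‖ₑ ≤
      (eLpNorm (X - Y) 4 ℙ * ℙ Bᶜ ^ ((1 : ℝ) / 4) + ENNReal.ofReal ε) *
        (eLpNorm X 2 ℙ + eLpNorm Y 2 ℙ) :=
    calc ‖∫ ω, (X - Y) ω * W ω‖ₑ ≤ eLpNorm ((X - Y) * W) 1 ℙ := by
          rw [eLpNorm_one_eq_lintegral_enorm]; exact enorm_integral_le_lintegral_enorm _
      _ ≤ _ := hXYW.trans (by gcongr)
  have hXY_fin := (hX.sub hY).eLpNorm_ne_top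
  have hX_fin := hX₂.eLpNorm_ne_top
  have hY_fin := hY₂.eLpNorm_ne_top
  rw [variance_sub_variance_eq_covariance hX₂ hY₂,
    covariance_eq_integral_mul_sub (hX₂.sub hY₂) (hX₂.add hY₂)]
  calc |∫ ω, (X - Y) ω * W ω| = (‖∫ ω, (X - Y) ω * W ω‖ₑ).toReal := by simp
    _ ≤ _ := ENNReal.toReal_mono (by finiteness) hbound
    _ = _ := by
      rw [ENNReal.toReal_mul, ENNReal.toReal_add, ENNReal.toReal_add, ENNReal.toReal_mul,
        ← ENNReal.toReal_rpow, ENNReal.toReal_ofReal hε.le]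
      · ring
      all_goals finiteness
end

section
/- For any α > 0 and any nonnegative random variable X with E[e^{αX}] < ∞, one has ‖X‖₂ ≤ (1/α) log(2 E[e^{αX}]). -/
/-!
The function `u ↦ cosh √u` is convex on `[0, ∞)`: its derivative `sinh √u / (2 √u)` is increasing
because `sinh x / x` is the slope of the convex function `sinh` from `0`. Jensen's inequality
applied to `(α X)²` then gives `cosh (α ‖X‖₂) ≤ E[cosh (α X)] ≤ E[e^{α X}]`, and
`e^{α ‖X‖₂} ≤ 2 cosh (α ‖X‖₂)`.
-/

open MeasureTheory ProbabilityTheory Real Set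

namespace Real

lemma convexOn_sinh_Ici : ConvexOn ℝ (Ici 0) sinh := by
  refine MonotoneOn.convexOn_of_deriv (convex_Ici 0) continuous_sinh.continuousOn
    differentiable_sinh.differentiableOn ?_
  rw [deriv_sinh, interior_Ici]
  intro x hx y hy hxy
  rwa [cosh_le_cosh, abs_of_pos hx, abs_of_pos hy]

lemma monotoneOn_sinh_div_self : MonotoneOn (fun x => sinh x / x) (Ioi 0) := by
  intro x hx y hy hxy
  simpa [slope_def_field] using
    convexOn_sinh_Ici.slope_mono self_mem_Ici ⟨mem_Ici.2 (le_of_lt hx), ne_of_gt hx⟩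
      ⟨mem_Ici.2 (le_of_lt hy), ne_of_gt hy⟩ hxy

lemma convexOn_cosh_sqrt : ConvexOn ℝ (Ici 0) (fun u => cosh √u) := by
  have hderiv : ∀ u : ℝ, 0 < u → HasDerivAt (fun u => cosh √u) (sinh √u / √u / 2) u := by
    intro u hu
    convert (hasDerivAt_sqrt hu.ne').cosh using 1
    field_simp
  refine MonotoneOn.convexOn_of_deriv (convex_Ici 0)
    (continuous_cosh.comp continuous_sqrt).continuousOn ?_ ?_ <;> rw [interior_Ici]
  · exact fun u hu => (hderiv u hu).differentiableAt.differentiableWithinAt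
  · intro u hu v hv huv
    rw [(hderiv u hu).deriv, (hderiv v hv).deriv]
    gcongr ?_ / 2
    exact monotoneOn_sinh_div_self (sqrt_pos.2 hu) (sqrt_pos.2 hv) (sqrt_le_sqrt huv)

lemma cosh_le_exp_of_nonneg {x : ℝ} (hx : 0 ≤ x) : cosh x ≤ exp x := by
  rw [cosh_eq]
  linarith [exp_le_exp.2 (neg_le_self hx)]

lemma exp_le_two_mul_cosh (x : ℝ) : exp x ≤ 2 * cosh x := by
  rw [cosh_eq]
  linarith [exp_pos (-x)]

end Real

namespace MeasureTheory

variable {α : Type*} [MeasurableSpace α] {μ : Measure α}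

lemma lpNorm_two_eq_sqrt_integral_sq {f : α → ℝ} (hf : AEStronglyMeasurable f μ) :
    lpNorm f 2 μ = √(∫ x, f x ^ 2 ∂μ) := by
  rw [lpNorm_eq_integral_norm_rpow_toReal two_ne_zero ENNReal.ofNat_ne_top hf, sqrt_eq_rpow]
  norm_num

lemma integrable_pow_of_integrable_exp_mul_of_nonneg {f : α → ℝ} {t : ℝ} (ht : 0 < t)
    (hf : ∀ x, 0 ≤ f x) (hexp : Integrable (fun x => exp (t * f x)) μ) (n : ℕ) :
    Integrable (fun x => f x ^ n) μ := by
  refine (hexp.const_mul (n.factorial / t ^ n)).mono' ?_ (ae_of_all _ fun x => ?_)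
  · exact ((aemeasurable_of_aemeasurable_exp_mul ht.ne' hexp.aemeasurable).pow_const
      n).aestronglyMeasurable
  · have h := pow_div_factorial_le_exp (t * f x) (mul_nonneg ht.le (hf x)) n
    rw [mul_pow, div_le_iff₀ (by positivity)] at h
    rw [Real.norm_of_nonneg (pow_nonneg (hf x) n), div_mul_eq_mul_div,
      le_div_iff₀ (by positivity)]
    linarith

end MeasureTheory

namespace ProbabilityTheory

variable {Ω : Type*} [MeasurableSpace Ω] {μ : Measure Ω} [IsProbabilityMeasure μ]

lemma cosh_lpNorm_two_le_integral_cosh {Y : Ω → ℝ} (hY : MemLp Y 2 μ)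
    (hcosh : Integrable (fun ω => cosh (Y ω)) μ) :
    cosh (lpNorm Y 2 μ) ≤ ∫ ω, cosh (Y ω) ∂μ := by
  have hcosh_sqrt_sq : ∀ y : ℝ, cosh √(y ^ 2) = cosh y := fun y => by
    rw [sqrt_sq_eq_abs, cosh_abs]
  rw [lpNorm_two_eq_sqrt_integral_sq hY.aestronglyMeasurable]
  simpa only [Function.comp_def, hcosh_sqrt_sq] using
    convexOn_cosh_sqrt.map_integral_le (continuous_cosh.comp continuous_sqrt).continuousOn
      isClosed_Ici (ae_of_all _ fun ω => sq_nonneg (Y ω)) hY.integrable_sq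
      (by simpa only [Function.comp_def, hcosh_sqrt_sq] using hcosh)

end ProbabilityTheory

/-- For `α > 0` and a nonnegative random variable `X` with `E[e^{αX}] < ∞`,
`‖X‖₂ ≤ (1/α) log (2 E[e^{αX}])`. -/
theorem stmt1 {Ω : Type*} [MeasureSpace Ω] [IsProbabilityMeasure (ℙ : Measure Ω)]
    (α : ℝ) (hα : 0 < α) (X : Ω → ℝ) (hXnn : ∀ ω, 0 ≤ X ω)
    (hint : Integrable (fun ω => Real.exp (α * X ω)) ℙ) :
    (eLpNorm X 2 ℙ).toReal ≤ (1/α) * Real.log (2 * ∫ ω, Real.exp (α * X ω)) := by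
  have hX : AEStronglyMeasurable X ℙ :=
    (aemeasurable_of_aemeasurable_exp_mul hα.ne' hint.aemeasurable).aestronglyMeasurable
  have hαX : MemLp (fun ω => α * X ω) 2 ℙ :=
    ((memLp_two_iff_integrable_sq hX).2
      (integrable_pow_of_integrable_exp_mul_of_nonneg hα hXnn hint 2)).const_mul α
  have hcosh_le_exp : ∀ ω, cosh (α * X ω) ≤ exp (α * X ω) := fun ω =>
    cosh_le_exp_of_nonneg (mul_nonneg hα.le (hXnn ω))
  have hcosh : Integrable (fun ω => cosh (α * X ω)) ℙ :=
    hint.mono (continuous_cosh.comp_aestronglyMeasurable hαX.aestronglyMeasurable)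
      (ae_of_all _ fun ω => by simpa [abs_of_pos (cosh_pos _)] using hcosh_le_exp ω)
  have hnorm : lpNorm (fun ω => α * X ω) 2 ℙ = α * (eLpNorm X 2 ℙ).toReal := by
    rw [toReal_eLpNorm hX]
    change lpNorm (α • X) 2 ℙ = _
    rw [lpNorm_const_smul, Real.nnnorm_of_nonneg hα.le]
    rfl
  rw [one_div, ← div_eq_inv_mul, le_div_iff₀' hα,
    le_log_iff_exp_le (mul_pos two_pos (integral_exp_pos hint)), ← hnorm]
  calc exp (lpNorm (fun ω => α * X ω) 2 ℙ)
      ≤ 2 * cosh (lpNorm (fun ω => α * X ω) 2 ℙ) := exp_le_two_mul_cosh _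
    _ ≤ 2 * ∫ ω, cosh (α * X ω) := by
      gcongr 2 * ?_
      exact cosh_lpNorm_two_le_integral_cosh hαX hcosh
    _ ≤ 2 * ∫ ω, exp (α * X ω) := by
      gcongr 2 * ?_
      exact integral_mono hcosh hint hcosh_le_exp
end

section
/- For any α > 0 and any nonnegative random variable X with finite second moment, e^{α‖X‖₂} ≤ α‖X‖₂ + E[e^{αX}]. -/
/-!
Expand both exponentials in their power series. On a probability space `‖Y‖₂ ≤ ‖Y‖ₙ` for
`n ≥ 2`, so `‖Y‖₂ⁿ ≤ E[Yⁿ]` for every `n ≠ 1`; the linear term `‖Y‖₂` is kept as is. Apply this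
to `Y = αX`.
-/

open MeasureTheory ProbabilityTheory Nat
open scoped ENNReal

theorem ENNReal.ofReal_exp_eq_tsum {x : ℝ} (hx : 0 ≤ x) :
    ENNReal.ofReal (Real.exp x) = ∑' n : ℕ, ENNReal.ofReal x ^ n / n ! := by
  rw [Real.exp_eq_exp_ℝ, NormedSpace.exp_eq_tsum_div, ENNReal.ofReal_tsum_of_nonneg
    (fun n => by positivity) (Real.summable_pow_div_factorial x)]
  congr 1 with n
  rw [ENNReal.ofReal_div_of_pos (by positivity), ENNReal.ofReal_pow hx, ENNReal.ofReal_natCast]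

namespace MeasureTheory

variable {Ω E : Type*} {m : MeasurableSpace Ω} {μ : Measure Ω} [NormedAddCommGroup E]

theorem eLpNorm_pow_le_lintegral_enorm_pow [IsProbabilityMeasure μ] {f : Ω → E}
    (hf : AEStronglyMeasurable f μ) {p : ℝ≥0∞} {n : ℕ} (hpn : p ≤ n) :
    eLpNorm f p μ ^ n ≤ ∫⁻ ω, ‖f ω‖ₑ ^ n ∂μ := by
  rcases eq_or_ne n 0 with rfl | hn
  · simp
  calc eLpNorm f p μ ^ n ≤ eLpNorm f n μ ^ n := by
        gcongr; exact eLpNorm_le_eLpNorm_of_exponent_le hpn hf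
    _ = ∫⁻ ω, ‖f ω‖ₑ ^ n ∂μ := by
        simpa using eLpNorm_nnreal_pow_eq_lintegral (f := f) (μ := μ) (p := n) (by simpa using hn)

theorem lintegral_ofReal_exp_eq_tsum {f : Ω → ℝ} (hf : 0 ≤ f) (hfm : AEMeasurable f μ) :
    ∫⁻ ω, ENNReal.ofReal (Real.exp (f ω)) ∂μ
      = ∑' n : ℕ, (∫⁻ ω, ENNReal.ofReal (f ω) ^ n ∂μ) / n ! := by
  have hpow (n : ℕ) : AEMeasurable (fun ω => ENNReal.ofReal (f ω) ^ n) μ :=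
    hfm.ennreal_ofReal.pow_const n
  simp_rw [ENNReal.ofReal_exp_eq_tsum (hf _), div_eq_mul_inv]
  rw [lintegral_tsum fun n => (hpow n).mul_const _]
  simp_rw [lintegral_mul_const'' _ (hpow _)]

theorem ofReal_exp_eLpNorm_le_of_le_two [IsProbabilityMeasure μ] {f : Ω → ℝ} (hf : 0 ≤ f)
    {p : ℝ≥0∞} (hp : p ≤ 2) (hfm : MemLp f p μ) :
    ENNReal.ofReal (Real.exp (eLpNorm f p μ).toReal)
      ≤ eLpNorm f p μ + ∫⁻ ω, ENNReal.ofReal (Real.exp (f ω)) ∂μ := by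
  have hmoment (n : ℕ) (hn : n ≠ 1) : eLpNorm f p μ ^ n ≤ ∫⁻ ω, ENNReal.ofReal (f ω) ^ n ∂μ := by
    rcases n with _ | _ | n
    · simp
    · contradiction
    · simpa [Real.enorm_eq_ofReal (hf _)] using
        eLpNorm_pow_le_lintegral_enorm_pow hfm.1 (n := n + 2) (hp.trans (by norm_cast; omega))
  rw [ENNReal.ofReal_exp_eq_tsum ENNReal.toReal_nonneg, ENNReal.ofReal_toReal hfm.eLpNorm_ne_top,
    ENNReal.tsum_eq_add_tsum_ite 1, lintegral_ofReal_exp_eq_tsum hf hfm.aemeasurable]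
  gcongr with n
  · simp
  · split_ifs with hn
    · exact bot_le
    · exact ENNReal.div_le_div_right (hmoment n hn) _

end MeasureTheory

/-- For `α > 0` and a nonnegative random variable `X` with finite second moment,
`e^{α ‖X‖₂} ≤ α ‖X‖₂ + E[e^{αX}]`, where the expectation is allowed to be infinite. -/
theorem stmt2 {Ω : Type*} [MeasureSpace Ω] [IsProbabilityMeasure (ℙ : Measure Ω)]
    (α : ℝ) (hα : 0 < α) (X : Ω → ℝ) (hXnn : ∀ ω, 0 ≤ X ω) (hX : MemLp X 2) :
    ENNReal.ofReal (Real.exp (α * (eLpNorm X 2 ℙ).toReal)) ≤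
      ENNReal.ofReal (α * (eLpNorm X 2 ℙ).toReal)
        + ∫⁻ ω, ENNReal.ofReal (Real.exp (α * X ω)) := by
  have hαX : MemLp (fun ω => α * X ω) 2 := hX.const_mul α
  have hnorm : (eLpNorm (fun ω => α * X ω) 2 ℙ).toReal = α * (eLpNorm X 2 ℙ).toReal := by
    rw [show (fun ω => α * X ω) = α • X from rfl, eLpNorm_const_smul, ENNReal.toReal_mul,
      toReal_enorm, Real.norm_of_nonneg hα.le]
  rw [← hnorm, ENNReal.ofReal_toReal hαX.eLpNorm_ne_top]
  exact ofReal_exp_eLpNorm_le_of_le_two (fun ω => mul_nonneg hα.le (hXnn ω)) le_rfl hαX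
end

section
/- Let f : ℝ₊^d → ℝ be convex, positively homogeneous, symmetric under coordinate permutations, and suppose there exist κ ≥ 1, C₁ > 0 and ε > 0 such that C₁|z|^κ ≤ |f(e+z) - f(e)| for all z with z·e = 0 and |z| < ε, where e = (1,...,1). Then there is a constant C > 0 such that for all large n and all lattice points v with 0 ≤ v ≤ ne, dist(v, ℝe) ∈ (n^{ξ'}, 2n^{ξ'}] for fixed ξ' ∈ (0,1], and |v| ≥ n/2: f(v) + f(ne - v) ≥ f(ne) + C n^{κξ' - (κ-1)}. -/
/-!
Write `m` for the mean of the coordinates of `v`, so that `m • 𝟙` is the orthogonal projection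
of `v` onto `ℝ𝟙`. Averaging over cyclic permutations shows that a convex symmetric `f` satisfies
`f (mean x • 𝟙) ≤ f x`; combined with subadditivity (convexity plus homogeneity) this gives
`f (n • 𝟙) ≤ f (m • 𝟙) + f (n • 𝟙 - v)`. By homogeneity `f v - f (m • 𝟙) = m (f (v / m) - f 𝟙)`,
where `v / m` lies on the hyperplane `∑ xᵢ = d` through `𝟙`. There `f - f 𝟙 ≥ 0`, so the
curvature bound gives growth `‖·‖ ^ κ` near `𝟙`, and convexity turns it into linear growth
farther out. Since `m ≤ n` and `‖v - m • 𝟙‖ > n ^ ξ'`, both regimes give at least a constant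
times `n ^ (κ ξ' - (κ - 1))`.
-/

local notation "𝟙" => WithLp.toLp 2 (fun _ => (1 : ℝ))

theorem ConvexOn.map_add_le_of_homogeneous {E : Type*} [AddCommGroup E] [Module ℝ E]
    {s : Set E} {f : E → ℝ} (hf : ConvexOn ℝ s f)
    (hhom : ∀ c : ℝ, 0 ≤ c → ∀ x ∈ s, f (c • x) = c * f x) {x y : E} (hx : x ∈ s)
    (hy : y ∈ s) : f (x + y) ≤ f x + f y := by
  have hmid : (2⁻¹ : ℝ) • x + (2⁻¹ : ℝ) • y ∈ s :=
    hf.1 hx hy (by norm_num) (by norm_num) (by norm_num)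
  calc f (x + y) = 2 * f ((2⁻¹ : ℝ) • x + (2⁻¹ : ℝ) • y) := by
        rw [← hhom 2 zero_le_two _ hmid, ← smul_add, smul_smul]; norm_num
    _ ≤ 2 * ((2⁻¹ : ℝ) • f x + (2⁻¹ : ℝ) • f y) := by
        gcongr; exact hf.2 hx hy (by norm_num) (by norm_num) (by norm_num)
    _ = f x + f y := by simp only [smul_eq_mul]; ring

theorem ConvexOn.mul_norm_le_sub_of_local_growth {E : Type*} [NormedAddCommGroup E]
    [NormedSpace ℝ E] {s : Set E} {f : E → ℝ} (hf : ConvexOn ℝ s f) {x y : E} (hx : x ∈ s)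
    (hy : y ∈ s) {C₁ ε κ : ℝ} (hε : 0 < ε)
    (hgrowth : ∀ z ∈ s, ‖z - x‖ < ε → C₁ * ‖z - x‖ ^ κ ≤ f z - f x) (hxy : ε ≤ ‖y - x‖) :
    C₁ * (ε / 2) ^ (κ - 1) * ‖y - x‖ ≤ f y - f x := by
  have hr : 0 < ‖y - x‖ := hε.trans_le hxy
  set θ := ε / (2 * ‖y - x‖)
  have hθ0 : 0 < θ := by positivity
  have hθ : θ ∈ Set.Icc (0 : ℝ) 1 := ⟨hθ0.le, by rw [div_le_one (by positivity)]; linarith⟩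
  have hθr : θ * ‖y - x‖ = ε / 2 := by simp only [θ]; field_simp
  have hnorm : ‖(x + θ • (y - x)) - x‖ = ε / 2 := by
    rw [add_sub_cancel_left, norm_smul, Real.norm_of_nonneg hθ0.le, hθr]
  have hnear := hgrowth _ (hf.1.add_smul_sub_mem hx hy hθ) (by rw [hnorm]; linarith)
  rw [hnorm] at hnear
  have hchord : f (x + θ • (y - x)) ≤ (1 - θ) • f x + θ • f y := by
    have hpoint : (1 - θ) • x + θ • y = x + θ • (y - x) := by
      rw [smul_sub, sub_smul, one_smul]; abel
    simpa only [hpoint] using hf.2 hx hy (sub_nonneg.2 hθ.2) hθ0.le (by ring)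
  refine le_of_mul_le_mul_right ?_ hθ0
  calc C₁ * (ε / 2) ^ (κ - 1) * ‖y - x‖ * θ = C₁ * (ε / 2) ^ κ := by
        rw [mul_assoc _ ‖y - x‖, mul_comm ‖y - x‖, hθr, mul_assoc, ← Real.rpow_add_one
          (by positivity), sub_add_cancel]
    _ ≤ (f y - f x) * θ := by simp only [smul_eq_mul] at hchord; nlinarith

theorem ConvexOn.mul_min_le_sub_of_local_growth {E : Type*} [NormedAddCommGroup E]
    [NormedSpace ℝ E] {s : Set E} {f : E → ℝ} (hf : ConvexOn ℝ s f) {x y : E} (hx : x ∈ s)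
    (hy : y ∈ s) {C₁ ε κ : ℝ} (hC₁ : 0 ≤ C₁) (hε : 0 < ε)
    (hgrowth : ∀ z ∈ s, ‖z - x‖ < ε → C₁ * ‖z - x‖ ^ κ ≤ f z - f x) :
    C₁ * min 1 ((ε / 2) ^ (κ - 1)) * min (‖y - x‖ ^ κ) ‖y - x‖ ≤ f y - f x := by
  have hpow : 0 ≤ (ε / 2) ^ (κ - 1) := by positivity
  rcases lt_or_ge ‖y - x‖ ε with hnear | hfar
  · calc C₁ * min 1 ((ε / 2) ^ (κ - 1)) * min (‖y - x‖ ^ κ) ‖y - x‖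
        ≤ C₁ * 1 * ‖y - x‖ ^ κ := by gcongr <;> exact min_le_left _ _
      _ ≤ f y - f x := by rw [mul_one]; exact hgrowth y hy hnear
  · calc C₁ * min 1 ((ε / 2) ^ (κ - 1)) * min (‖y - x‖ ^ κ) ‖y - x‖
        ≤ C₁ * (ε / 2) ^ (κ - 1) * ‖y - x‖ := by gcongr <;> exact min_le_right _ _
      _ ≤ f y - f x := hf.mul_norm_le_sub_of_local_growth hx hy hε hgrowth hfar

theorem ConvexOn.map_mean_smul_le {d : ℕ} [NeZero d] {s : Set (EuclideanSpace ℝ (Fin d))}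
    {f : EuclideanSpace ℝ (Fin d) → ℝ} (hf : ConvexOn ℝ s f)
    (hs : ∀ σ : Equiv.Perm (Fin d), ∀ x ∈ s, WithLp.toLp 2 (fun i => x (σ i)) ∈ s)
    (hperm : ∀ σ : Equiv.Perm (Fin d), ∀ x ∈ s, f (WithLp.toLp 2 (fun i => x (σ i))) = f x)
    {x : EuclideanSpace ℝ (Fin d)} (hx : x ∈ s) : f (((∑ i, x i) / d) • 𝟙) ≤ f x := by
  set shift : Fin d → EuclideanSpace ℝ (Fin d) :=
    fun k => WithLp.toLp 2 (fun i => x (Equiv.addLeft k i))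
  have hd : (d : ℝ) ≠ 0 := Nat.cast_ne_zero.2 (NeZero.ne d)
  have hweights : ∑ _k : Fin d, (d : ℝ)⁻¹ = 1 := by simp [hd]
  -- averaging the cyclic shifts of `x` produces its mean in every coordinate
  have haverage : ∑ k, (d : ℝ)⁻¹ • shift k = ((∑ i, x i) / d) • 𝟙 := by
    ext i
    simp only [shift, WithLp.ofLp_sum, Finset.sum_apply, PiLp.smul_apply,
      smul_eq_mul, ← Finset.mul_sum, mul_one]
    rw [show ∑ k, x (Equiv.addLeft k i) = ∑ j, x j from Equiv.sum_comp (Equiv.addRight i) _]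
    ring
  calc f (((∑ i, x i) / d) • 𝟙) = f (∑ k, (d : ℝ)⁻¹ • shift k) := by rw [haverage]
    _ ≤ ∑ k, (d : ℝ)⁻¹ • f (shift k) :=
        hf.map_sum_le (fun _ _ => by positivity) hweights fun k _ => hs _ x hx
    _ = f x := by simp only [shift, hperm _ x hx, ← Finset.sum_smul, hweights, one_smul]

theorem Real.rpow_le_mul_min_of_le {n m r κ ξ : ℝ} (hn : 1 ≤ n) (hm : 0 < m) (hmn : m ≤ n)
    (hr : n ^ ξ ≤ r) (hκ : 1 ≤ κ) (hξ : ξ ≤ 1) :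
    n ^ (κ * ξ - (κ - 1)) ≤ m * min ((r / m) ^ κ) (r / m) := by
  have hn0 : 0 < n := zero_lt_one.trans_le hn
  have hr0 : 0 ≤ r := (Real.rpow_nonneg hn0.le ξ).trans hr
  rw [mul_min_of_nonneg _ _ hm.le, mul_div_cancel₀ r hm.ne']
  refine le_min ?_ ((Real.rpow_le_rpow_of_exponent_le hn (by nlinarith)).trans hr)
  calc n ^ (κ * ξ - (κ - 1)) = n ^ (1 - κ) * (n ^ ξ) ^ κ := by
        rw [← Real.rpow_mul hn0.le, ← Real.rpow_add hn0]; ring_nf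
    _ ≤ m ^ (1 - κ) * r ^ κ := by
        refine mul_le_mul (Real.rpow_le_rpow_of_nonpos hm hmn (by linarith))
          (Real.rpow_le_rpow (by positivity) hr (by linarith)) (by positivity) (by positivity)
    _ = m * (r / m) ^ κ := by
        rw [Real.div_rpow hr0 hm.le, Real.rpow_sub hm, Real.rpow_one]; ring

def orthant (d : ℕ) : Set (EuclideanSpace ℝ (Fin d)) := {x | ∀ i, 0 ≤ x i}

section Orthant

variable {d : ℕ} {f : EuclideanSpace ℝ (Fin d) → ℝ}

theorem perm_mem_orthant (σ : Equiv.Perm (Fin d)) (x : EuclideanSpace ℝ (Fin d))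
    (hx : x ∈ orthant d) : WithLp.toLp 2 (fun i => x (σ i)) ∈ orthant d :=
  fun i => hx (σ i)

theorem one_mem_orthant : (𝟙 : EuclideanSpace ℝ (Fin d)) ∈ orthant d :=
  fun _ => zero_le_one

theorem map_one_le_of_sum_eq [NeZero d] (hconv : ConvexOn ℝ (orthant d) f)
    (hperm : ∀ σ : Equiv.Perm (Fin d), ∀ x ∈ orthant d,
      f (WithLp.toLp 2 (fun i => x (σ i))) = f x)
    {u : EuclideanSpace ℝ (Fin d)} (hu : u ∈ orthant d) (hsum : ∑ i, u i = d) :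
    f 𝟙 ≤ f u := by
  simpa [hsum, NeZero.ne d] using hconv.map_mean_smul_le perm_mem_orthant hperm hu

theorem map_smul_one_le_add_map_sub [NeZero d] (hconv : ConvexOn ℝ (orthant d) f)
    (hhom : ∀ c : ℝ, 0 ≤ c → ∀ x ∈ orthant d, f (c • x) = c * f x)
    (hperm : ∀ σ : Equiv.Perm (Fin d), ∀ x ∈ orthant d,
      f (WithLp.toLp 2 (fun i => x (σ i))) = f x)
    {n : ℝ} {x : EuclideanSpace ℝ (Fin d)} (hx : x ∈ orthant d) (hxn : ∀ i, x i ≤ n) :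
    f (n • 𝟙) ≤ f (((∑ i, x i) / d) • 𝟙) + f (n • 𝟙 - x) := by
  set m := (∑ i, x i) / d
  have hm : m • 𝟙 ∈ orthant d := fun i => by
    simpa [m] using div_nonneg (Finset.sum_nonneg fun j _ => hx j) (Nat.cast_nonneg d)
  have hcompl : n • 𝟙 - x ∈ orthant d := fun i => by simpa using hxn i
  set y : EuclideanSpace ℝ (Fin d) := m • 𝟙 + (n • 𝟙 - x)
  have hy : y ∈ orthant d := fun i => add_nonneg (hm i) (hcompl i)
  have hmean : (∑ i, y i) / d = n := by
    have hd : (d : ℝ) ≠ 0 := Nat.cast_ne_zero.2 (NeZero.ne d)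
    simp [y, Finset.sum_add_distrib, Finset.sum_sub_distrib, m]
    field_simp
    ring
  calc f (n • 𝟙) ≤ f y := by
        simpa only [hmean] using hconv.map_mean_smul_le perm_mem_orthant hperm hy
    _ ≤ f (m • 𝟙) + f (n • 𝟙 - x) := hconv.map_add_le_of_homogeneous hhom hm hcompl

theorem mul_min_le_map_sub_map_one [NeZero d] (hconv : ConvexOn ℝ (orthant d) f)
    (hperm : ∀ σ : Equiv.Perm (Fin d), ∀ x ∈ orthant d,
      f (WithLp.toLp 2 (fun i => x (σ i))) = f x)
    {C₁ ε κ : ℝ} (hC₁ : 0 ≤ C₁) (hε : 0 < ε)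
    (hcurv : ∀ z : EuclideanSpace ℝ (Fin d), (∑ i, z i) = 0 → ‖z‖ < ε →
      C₁ * ‖z‖ ^ κ ≤ |f (𝟙 + z) - f 𝟙|)
    {u : EuclideanSpace ℝ (Fin d)} (hu : u ∈ orthant d) (hsum : ∑ i, u i = d) :
    C₁ * min 1 ((ε / 2) ^ (κ - 1)) * min (‖u - 𝟙‖ ^ κ) ‖u - 𝟙‖ ≤ f u - f 𝟙 := by
  set s := orthant d ∩ {u | ∑ i, u i = d}
  have hhyperplane : Convex ℝ {u : EuclideanSpace ℝ (Fin d) | ∑ i, u i = d} :=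
    convex_hyperplane ⟨fun x y => by simp [Finset.sum_add_distrib],
      fun c x => by simp [Finset.mul_sum]⟩ _
  have hconv' : ConvexOn ℝ s f := hconv.subset Set.inter_subset_left (hconv.1.inter hhyperplane)
  have hone : 𝟙 ∈ s := ⟨one_mem_orthant, by simp⟩
  refine hconv'.mul_min_le_sub_of_local_growth hone ⟨hu, hsum⟩ hC₁ hε fun z hz hzε => ?_
  have hzsum : ∑ i, z i = d := hz.2
  have hz0 : ∑ i, (z - 𝟙 : EuclideanSpace ℝ (Fin d)) i = 0 := by
    simp [Finset.sum_sub_distrib, hzsum]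
  have hmin := map_one_le_of_sum_eq hconv hperm hz.1 hzsum
  simpa [abs_of_nonneg (sub_nonneg.2 hmin)] using hcurv (z - 𝟙) hz0 hzε

theorem sum_pos_of_mem_orthant {x : EuclideanSpace ℝ (Fin d)} (hx : x ∈ orthant d)
    (hx0 : x ≠ 0) : 0 < ∑ i, x i := by
  refine (Finset.sum_nonneg fun i _ => hx i).lt_of_ne' fun hsum => hx0 ?_
  ext i
  simpa using (Finset.sum_eq_zero_iff_of_nonneg fun j _ => hx j).1 hsum i (Finset.mem_univ i)

theorem map_smul_one_add_mul_rpow_le [NeZero d] (hconv : ConvexOn ℝ (orthant d) f)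
    (hhom : ∀ c : ℝ, 0 ≤ c → ∀ x ∈ orthant d, f (c • x) = c * f x)
    (hperm : ∀ σ : Equiv.Perm (Fin d), ∀ x ∈ orthant d,
      f (WithLp.toLp 2 (fun i => x (σ i))) = f x)
    {C₁ ε κ : ℝ} (hC₁ : 0 ≤ C₁) (hε : 0 < ε) (hκ : 1 ≤ κ)
    (hcurv : ∀ z : EuclideanSpace ℝ (Fin d), (∑ i, z i) = 0 → ‖z‖ < ε →
      C₁ * ‖z‖ ^ κ ≤ |f (𝟙 + z) - f 𝟙|)
    {n ξ : ℝ} (hn : 1 ≤ n) (hξ : ξ ≤ 1) {x : EuclideanSpace ℝ (Fin d)} (hx : x ∈ orthant d)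
    (hxn : ∀ i, x i ≤ n) (hdist : n ^ ξ ≤ ‖x - ((∑ i, x i) / d) • 𝟙‖) :
    f (n • 𝟙) + C₁ * min 1 ((ε / 2) ^ (κ - 1)) * n ^ (κ * ξ - (κ - 1)) ≤
      f x + f (n • 𝟙 - x) := by
  set C := C₁ * min 1 ((ε / 2) ^ (κ - 1))
  set m := (∑ i, x i) / d
  set r := ‖x - m • 𝟙‖
  have hx0 : x ≠ 0 := by
    rintro rfl
    have hr0 : r = 0 := by simp [r, m]
    linarith [Real.rpow_pos_of_pos (zero_lt_one.trans_le hn) ξ]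
  have hd : (0 : ℝ) < d := Nat.cast_pos.2 (NeZero.pos d)
  have hsum := sum_pos_of_mem_orthant hx hx0
  have hm : 0 < m := div_pos hsum hd
  have hmn : m ≤ n := by
    rw [div_le_iff₀ hd]
    simpa [mul_comm] using Finset.sum_le_sum fun i (_ : i ∈ Finset.univ) => hxn i
  set u : EuclideanSpace ℝ (Fin d) := m⁻¹ • x
  have hu : u ∈ orthant d := fun i => by simpa [u] using mul_nonneg (inv_nonneg.2 hm.le) (hx i)
  have husum : ∑ i, u i = d := by simp [u, ← Finset.mul_sum, m, hsum.ne']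
  have hunorm : ‖u - 𝟙‖ = r / m := by
    rw [show u - 𝟙 = m⁻¹ • (x - m • 𝟙) by simp [u, smul_sub, smul_smul, hm.ne'],
      norm_smul, Real.norm_of_nonneg (inv_nonneg.2 hm.le), inv_mul_eq_div]
  have hgrowth := mul_min_le_map_sub_map_one hconv hperm hC₁ hε hcurv hu husum
  rw [hunorm] at hgrowth
  have hgap : C * n ^ (κ * ξ - (κ - 1)) ≤ f x - f (m • 𝟙) := calc
    C * n ^ (κ * ξ - (κ - 1)) ≤ C * (m * min ((r / m) ^ κ) (r / m)) := by
        gcongr; exact Real.rpow_le_mul_min_of_le hn hm hmn hdist hκ hξ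
    _ = m * (C * min ((r / m) ^ κ) (r / m)) := by ring
    _ ≤ m * (f u - f 𝟙) := by gcongr
    _ = f x - f (m • 𝟙) := by
        rw [show x = m • u by simp [u, smul_smul, hm.ne'], hhom m hm.le u hu,
          hhom m hm.le 𝟙 one_mem_orthant]
        ring
  linarith [map_smul_one_le_add_map_sub hconv hhom hperm hx hxn]

end Orthant

theorem stmt10_general {d : ℕ} (hd : 0 < d) (f : EuclideanSpace ℝ (Fin d) → ℝ)
    (e : EuclideanSpace ℝ (Fin d)) (he : e = WithLp.toLp 2 (fun _ => (1 : ℝ)))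
    (hconv : ConvexOn ℝ {x : EuclideanSpace ℝ (Fin d) | ∀ i, 0 ≤ x i} f)
    (hhom : ∀ (lam : ℝ), 0 ≤ lam → ∀ x : EuclideanSpace ℝ (Fin d), (∀ i, 0 ≤ x i) →
      f (lam • x) = lam * f x)
    (hperm : ∀ (σ : Equiv.Perm (Fin d)) (x : EuclideanSpace ℝ (Fin d)), (∀ i, 0 ≤ x i) →
      f (WithLp.toLp 2 (fun i => x (σ i))) = f x)
    (κ C₁ ε : ℝ) (hκ : 1 ≤ κ) (hC₁ : 0 < C₁) (hε : 0 < ε)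
    (hcurv : ∀ z : EuclideanSpace ℝ (Fin d), (∑ i, z i) = 0 → ‖z‖ < ε →
      C₁ * ‖z‖ ^ κ ≤ |f (e + z) - f e|)
    (ξ' : ℝ) (hξ'₁ : ξ' ≤ 1) :
    ∃ C > (0 : ℝ), ∃ N : ℕ, ∀ n : ℕ, N ≤ n →
      ∀ v : Fin d → ℤ, (∀ i, 0 ≤ v i) → (∀ i, v i ≤ n) →
        ∀ vr : EuclideanSpace ℝ (Fin d), vr = WithLp.toLp 2 (fun i => (v i : ℝ)) →
        ((n : ℝ) ^ ξ' < ‖vr - ((∑ i, (v i : ℝ)) / d) • e‖) →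
        (‖vr - ((∑ i, (v i : ℝ)) / d) • e‖ ≤ 2 * (n : ℝ) ^ ξ') →
        ((n : ℝ) / 2 ≤ ‖vr‖) →
        f vr + f ((n : ℝ) • e - vr) ≥ f ((n : ℝ) • e) + C * (n : ℝ) ^ (κ * ξ' - (κ - 1)) := by
  subst he
  have : NeZero d := ⟨hd.ne'⟩
  refine ⟨C₁ * min 1 ((ε / 2) ^ (κ - 1)), by positivity, 1,
    fun n hn v hv0 hvn vr hvr hfar _ _ => ?_⟩
  subst hvr
  exact map_smul_one_add_mul_rpow_le hconv hhom hperm hC₁.le hε hκ hcurv (mod_cast hn) hξ'₁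
    (fun i => by simpa using hv0 i) (fun i => by simpa using (Int.cast_le (R := ℝ)).2 (hvn i))
    (by simpa using hfar.le)

/-- Curvature lower bound along the diagonal gives: for large `n` and lattice points `v` with
`0 ≤ v ≤ n e`, `dist(v, ℝe) ∈ (n^{ξ'}, 2 n^{ξ'}]` and `|v| ≥ n/2`,
`f(v) + f(ne - v) ≥ f(ne) + C n^{κ ξ' - (κ - 1)}`. -/
theorem stmt10 {d : ℕ} (hd : 0 < d) (f : EuclideanSpace ℝ (Fin d) → ℝ)
    (e : EuclideanSpace ℝ (Fin d)) (he : e = WithLp.toLp 2 (fun _ => (1 : ℝ)))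
    (hconv : ConvexOn ℝ {x : EuclideanSpace ℝ (Fin d) | ∀ i, 0 ≤ x i} f)
    (hhom : ∀ (lam : ℝ), 0 ≤ lam → ∀ x : EuclideanSpace ℝ (Fin d), (∀ i, 0 ≤ x i) →
      f (lam • x) = lam * f x)
    (hperm : ∀ (σ : Equiv.Perm (Fin d)) (x : EuclideanSpace ℝ (Fin d)), (∀ i, 0 ≤ x i) →
      f (WithLp.toLp 2 (fun i => x (σ i))) = f x)
    (κ C₁ ε : ℝ) (hκ : 1 ≤ κ) (hC₁ : 0 < C₁) (hε : 0 < ε)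
    (hcurv : ∀ z : EuclideanSpace ℝ (Fin d), (∑ i, z i) = 0 → ‖z‖ < ε →
      C₁ * ‖z‖ ^ κ ≤ |f (e + z) - f e|)
    (ξ' : ℝ) (hξ'₀ : 0 < ξ') (hξ'₁ : ξ' ≤ 1) :
    ∃ C > (0 : ℝ), ∃ N : ℕ, ∀ n : ℕ, N ≤ n →
      ∀ v : Fin d → ℤ, (∀ i, 0 ≤ v i) → (∀ i, v i ≤ n) →
        ∀ vr : EuclideanSpace ℝ (Fin d), vr = WithLp.toLp 2 (fun i => (v i : ℝ)) →
        ((n : ℝ) ^ ξ' < ‖vr - ((∑ i, (v i : ℝ)) / d) • e‖) →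
        (‖vr - ((∑ i, (v i : ℝ)) / d) • e‖ ≤ 2 * (n : ℝ) ^ ξ') →
        ((n : ℝ) / 2 ≤ ‖vr‖) →
        f vr + f ((n : ℝ) • e - vr) ≥ f ((n : ℝ) • e) + C * (n : ℝ) ^ (κ * ξ' - (κ - 1)) :=
  stmt10_general hd f e he hconv hhom hperm κ C₁ ε hκ hC₁ hε hcurv ξ' hξ'₁
end
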